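/- Let A be a modal formula and F = (W, {≺_B}) an N-frame. If F is A-transitive (for all x, y, z ∈ W, x ≺_{□A} y and y ≺_A z imply x ≺_A z), then the formula □A → □□A is valid in F, i.e., true at every world of every N-model based on F. -/
import Mathlib


/-- Modal formulas: propositional variables, ⊥, ∧, ∨, →, □.  Negation is defined. -/
inductive Formula : Type
  | var : ℕ → Formula
  | bot : Formula
  | and : Formula → Formula → Formula
  | or : Formula → Formula → Formula
  | imp : Formula → Formula → Formula
  | box : Formula → Formula
deriving DecidableEq

namespace Formula
/-- ¬A := A → ⊥ -/
def neg (A : Formula) : Formula := A.imp .bot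
end Formula

/-- `A` is a propositional tautology (in the modal language): it is true under every
assignment of truth values that respects the propositional connectives (variables and
boxed formulas are treated as atoms). -/
def IsTautology (A : Formula) : Prop :=
  ∀ v : Formula → Prop,
    (¬ v .bot) →
    (∀ B C, v (.and B C) ↔ (v B ∧ v C)) →
    (∀ B C, v (.or B C) ↔ (v B ∨ v C)) →
    (∀ B C, v (.imp B C) ↔ (v B → v C)) →
    v A

/-- Satisfaction in an N-model `(W, {≺_B}, ⊩)` with relations `R` and valuation `V`:
`x ⊩ □B` iff every `y` with `x ≺_B y` satisfies `B`. -/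
def Sat {W : Type} (R : Formula → W → W → Prop) (V : W → ℕ → Prop) :
    W → Formula → Prop
  | w, .var n => V w n
  | _, .bot => False
  | w, .and A B => Sat R V w A ∧ Sat R V w B
  | w, .or A B => Sat R V w A ∨ Sat R V w B
  | w, .imp A B => Sat R V w A → Sat R V w B
  | w, .box A => ∀ y, R A w y → Sat R V y A

/-- The set of subformulas Sub(A). -/
def subf : Formula → Finset Formula
  | .var n => {.var n}
  | .bot => {.bot}
  | .and A B => insert (.and A B) (subf A ∪ subf B)
  | .or A B => insert (.or A B) (subf A ∪ subf B)
  | .imp A B => insert (.imp A B) (subf A ∪ subf B)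
  | .box A => insert (.box A) (subf A)

/-- If an N-frame is `A`-transitive then `□A → □□A` is valid in it. -/
theorem stmt1 (W : Type) [Nonempty W] (R : Formula → W → W → Prop) (A : Formula)
    (htrans : ∀ x y z : W, R A.box x y → R A y z → R A x z) :
    ∀ (V : W → ℕ → Prop) (x : W), Sat R V x (A.box.imp A.box.box) := by
  intro V x h y hxy z hyz
  exact h z (htrans x y z hxy hyz)
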